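/- With the distributions P_1, …, P_T defined from the labeling functions ℓ_1, …, ℓ_T, the following hold: (i) ‖P_T − P_{T−1}‖_F = Δ/2; (ii) ‖P_t − P_{t−1}‖_F = Δ for every t with 1 < t < T; and (iii) max_{0 ≤ t ≤ r−1} ‖P_T − P_{T−t}‖_F ≤ Δ for every 1 ≤ r ≤ T. -/

import Mathlib

open MeasureTheory
open scoped Classical

/-- The zero-one loss `L_h(x, y) = 1` if `y ≠ h(x)` and `0` otherwise. -/
noncomputable def lossB {X : Type*} (h : X → Bool) (z : X × Bool) : ℝ :=
  if z.2 = h z.1 then 0 else 1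

/-- The threshold hypothesis with parameter `(b, c)`:
`h_c(x) = 1[x ≥ c]` if `b = true`, and `h'_c(x) = 1[x < c]` if `b = false`. -/
noncomputable def thr (p : Bool × ℝ) (x : ℝ) : Bool :=
  if p.1 then (if p.2 ≤ x then true else false) else (if x < p.2 then true else false)

/-- The distribution of `(X, ℓ(X))` with `X` uniform on `[0,1]`. -/
noncomputable def Pl (ℓ : ℝ → Bool) : Measure (ℝ × Bool) :=
  (volume.restrict (Set.Icc (0 : ℝ) 1)).map fun x => (x, ℓ x)

/-- `‖P − Q‖_F` for the family `F` of losses of threshold classifiers with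
thresholds `c ∈ [0,1]` (both orientations). -/
noncomputable def dThresh (P Q : Measure (ℝ × Bool)) : ℝ :=
  ⨆ p : Bool × (Set.Icc (0 : ℝ) 1),
    |(∫ z, lossB (thr (p.1, (p.2 : ℝ))) z ∂P)
      - ∫ z, lossB (thr (p.1, (p.2 : ℝ))) z ∂Q|

/-- The labeling function `ℓ_s` for `1 ≤ s ≤ T`: `ℓ_T` is given, and for
`s = T − t` with `1 ≤ t < T`, `ℓ_{T−t}(x) = 1 − ℓ_T(x)` if (`x ∈ I_0` and `t` odd)
or (`x ∈ I_1` and `t` even), and `ℓ_{T−t}(x) = ℓ_T(x)` otherwise, where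
`I_0 = [p_0, p_0 + Δ/2)` and `I_1 = [p_1, p_1 + Δ/2)`. -/
noncomputable def ellSeq (ℓT : ℝ → Bool) (p0 p1 Δ : ℝ) (T s : ℕ) : ℝ → Bool :=
  fun x =>
    if s = T then ℓT x
    else if (x ∈ Set.Ico p0 (p0 + Δ / 2) ∧ (T - s) % 2 = 1) ∨
           (x ∈ Set.Ico p1 (p1 + Δ / 2) ∧ (T - s) % 2 = 0) then !(ℓT x)
    else ℓT x

lemma meas_thr (p : Bool × ℝ) : Measurable (thr p) := by
  unfold thr
  rcases p with ⟨b, c⟩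
  cases b
  · simpa [decide_eq_true_eq] using (Measurable.ite measurableSet_Iio measurable_const measurable_const : Measurable fun x : ℝ => if x < c then true else false)
  · simpa using (Measurable.ite measurableSet_Ici measurable_const measurable_const : Measurable fun x : ℝ => if c ≤ x then true else false)

lemma meas_lossB {h : ℝ → Bool} (hh : Measurable h) : Measurable (lossB h) := by
  have hset : MeasurableSet {z : ℝ × Bool | z.2 = h z.1} := by
    have heq : {z : ℝ × Bool | z.2 = h z.1}
        = (fun z : ℝ × Bool => (z.2, h z.1)) ⁻¹' {q : Bool × Bool | q.1 = q.2} := rfl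
    rw [heq]
    exact (measurable_snd.prodMk (hh.comp measurable_fst)) (Set.toFinite _).measurableSet
  exact Measurable.ite hset measurable_const measurable_const

lemma integral_Pl (ℓ : ℝ → Bool) (hℓ : Measurable ℓ) (g : ℝ × Bool → ℝ) (hg : Measurable g) :
    ∫ z, g z ∂(Pl ℓ) = ∫ x in Set.Icc (0:ℝ) 1, g (x, ℓ x) := by
  unfold Pl
  have hm : Measurable fun x : ℝ => (x, ℓ x) := measurable_id.prodMk hℓ
  rw [integral_map hm.aemeasurable hg.aestronglyMeasurable]

lemma intOn (ℓ : ℝ → Bool) (hℓ : Measurable ℓ) {h : ℝ → Bool} (hh : Measurable h) :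
    IntegrableOn (fun x => lossB h (x, ℓ x)) (Set.Icc (0:ℝ) 1) := by
  have hm : Measurable (fun x => lossB h (x, ℓ x)) :=
    (meas_lossB hh).comp (measurable_id.prodMk hℓ)
  refine Integrable.mono' (g := fun _ => (1:ℝ)) ?_ hm.aestronglyMeasurable ?_
  · exact integrableOn_const (by simp)
  · filter_upwards with x
    unfold lossB; split <;> simp

lemma diff_le (ℓ ℓ' : ℝ → Bool) (hℓ : Measurable ℓ) (hℓ' : Measurable ℓ')
    (S : Set ℝ) (hS : MeasurableSet S) (hsub : ∀ x, ℓ x ≠ ℓ' x → x ∈ S)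
    (p : Bool × ℝ) :
    |(∫ z, lossB (thr p) z ∂(Pl ℓ)) - ∫ z, lossB (thr p) z ∂(Pl ℓ')|
      ≤ (volume (S ∩ Set.Icc (0:ℝ) 1)).toReal := by
  rw [integral_Pl ℓ hℓ _ (meas_lossB (meas_thr p)),
    integral_Pl ℓ' hℓ' _ (meas_lossB (meas_thr p)),
    ← integral_sub (intOn ℓ hℓ (meas_thr p)) (intOn ℓ' hℓ' (meas_thr p))]
  have hb : ∀ x, |lossB (thr p) (x, ℓ x) - lossB (thr p) (x, ℓ' x)|
      ≤ S.indicator (fun _ => (1:ℝ)) x := by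
    intro x
    by_cases hx : ℓ x = ℓ' x
    · simp [hx, Set.indicator_apply]
      split <;> norm_num
    · rw [Set.indicator_of_mem (hsub x hx)]
      unfold lossB
      split <;> split <;> norm_num
  calc |∫ x in Set.Icc (0:ℝ) 1, (lossB (thr p) (x, ℓ x) - lossB (thr p) (x, ℓ' x))|
      ≤ ∫ x in Set.Icc (0:ℝ) 1, |lossB (thr p) (x, ℓ x) - lossB (thr p) (x, ℓ' x)| :=
        by simpa [Real.norm_eq_abs] using
          norm_integral_le_integral_norm (μ := volume.restrict (Set.Icc (0:ℝ) 1))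
            (f := fun x => lossB (thr p) (x, ℓ x) - lossB (thr p) (x, ℓ' x))
    _ ≤ ∫ x in Set.Icc (0:ℝ) 1, S.indicator (fun _ => (1:ℝ)) x := by
        refine integral_mono ((intOn ℓ hℓ (meas_thr p)).sub (intOn ℓ' hℓ' (meas_thr p))).abs ?_ hb
        refine (integrable_indicator_iff hS).2 (integrableOn_const ?_)
        rw [Measure.restrict_apply hS]
        exact (lt_of_le_of_lt (measure_mono Set.inter_subset_right) (by simp)).ne
    _ = (volume (S ∩ Set.Icc (0:ℝ) 1)).toReal := by
        have : (fun x => S.indicator (fun _ => (1:ℝ)) x) = S.indicator (1 : ℝ → ℝ) := rfl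
        rw [this, integral_indicator_one hS, measureReal_def, Measure.restrict_apply hS]

lemma dThresh_le (ℓ ℓ' : ℝ → Bool) (hℓ : Measurable ℓ) (hℓ' : Measurable ℓ')
    (S : Set ℝ) (hS : MeasurableSet S) (hsub : ∀ x, ℓ x ≠ ℓ' x → x ∈ S)
    (a : ℝ) (ha : (volume (S ∩ Set.Icc (0:ℝ) 1)).toReal ≤ a) :
    dThresh (Pl ℓ) (Pl ℓ') ≤ a :=
  ciSup_le fun q => (diff_le ℓ ℓ' hℓ hℓ' S hS hsub (q.1, q.2)).trans ha

lemma diff_eq (ℓ ℓ' : ℝ → Bool) (hℓ : Measurable ℓ) (hℓ' : Measurable ℓ')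
    (S : Set ℝ) (hS : MeasurableSet S) (hSsub : S ⊆ Set.Icc (0:ℝ) 1)
    (h1 : ∀ x, ℓ x ≠ ℓ' x → x ∈ S) (p : Bool × ℝ)
    (hp : ∀ x ∈ S, ℓ x ≠ thr p x ∧ ℓ' x = thr p x) :
    (∫ z, lossB (thr p) z ∂(Pl ℓ)) - ∫ z, lossB (thr p) z ∂(Pl ℓ')
      = (volume S).toReal := by
  rw [integral_Pl ℓ hℓ _ (meas_lossB (meas_thr p)),
    integral_Pl ℓ' hℓ' _ (meas_lossB (meas_thr p)),
    ← integral_sub (intOn ℓ hℓ (meas_thr p)) (intOn ℓ' hℓ' (meas_thr p))]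
  have key : (fun x => lossB (thr p) (x, ℓ x) - lossB (thr p) (x, ℓ' x))
      = S.indicator (1 : ℝ → ℝ) := by
    funext x
    by_cases hx : x ∈ S
    · rcases hp x hx with ⟨ha, hb⟩
      rw [Set.indicator_of_mem hx]
      simp only [lossB, ha, hb, if_neg ha, if_pos hb]
      norm_num
    · have hxx : ℓ x = ℓ' x := by
        by_contra hc; exact hx (h1 x hc)
      rw [Set.indicator_of_notMem hx]
      simp [lossB, hxx]
  rw [show (fun a => lossB (thr p) (a, ℓ a) - lossB (thr p) (a, ℓ' a)) = S.indicator (1 : ℝ → ℝ) from key]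
  rw [integral_indicator_one hS, measureReal_def, Measure.restrict_apply hS, Set.inter_eq_left.2 hSsub]

lemma dThresh_comm (P Q : Measure (ℝ × Bool)) : dThresh P Q = dThresh Q P := by
  simp only [dThresh, abs_sub_comm]

lemma dThresh_eq (ℓ ℓ' : ℝ → Bool) (hℓ : Measurable ℓ) (hℓ' : Measurable ℓ')
    (S : Set ℝ) (hS : MeasurableSet S) (hSsub : S ⊆ Set.Icc (0:ℝ) 1)
    (h1 : ∀ x, ℓ x ≠ ℓ' x → x ∈ S) (p : Bool × (Set.Icc (0:ℝ) 1))
    (hp : ∀ x ∈ S, ℓ x ≠ thr (p.1, (p.2 : ℝ)) x ∧ ℓ' x = thr (p.1, (p.2 : ℝ)) x) :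
    dThresh (Pl ℓ) (Pl ℓ') = (volume S).toReal := by
  have hSI : S ∩ Set.Icc (0:ℝ) 1 = S := Set.inter_eq_left.2 hSsub
  have key : ∀ q : Bool × (Set.Icc (0:ℝ) 1),
      |(∫ z, lossB (thr (q.1, (q.2 : ℝ))) z ∂(Pl ℓ))
        - ∫ z, lossB (thr (q.1, (q.2 : ℝ))) z ∂(Pl ℓ')| ≤ (volume S).toReal := by
    intro q
    simpa [hSI] using diff_le ℓ ℓ' hℓ hℓ' S hS h1 (q.1, (q.2 : ℝ))
  refine le_antisymm (ciSup_le key) ?_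
  have hbdd : BddAbove (Set.range fun q : Bool × (Set.Icc (0:ℝ) 1) =>
      |(∫ z, lossB (thr (q.1, (q.2 : ℝ))) z ∂(Pl ℓ))
        - ∫ z, lossB (thr (q.1, (q.2 : ℝ))) z ∂(Pl ℓ')|) :=
    ⟨(volume S).toReal, Set.forall_mem_range.2 key⟩
  have hval := diff_eq ℓ ℓ' hℓ hℓ' S hS hSsub h1 (p.1, (p.2 : ℝ)) hp
  have := le_ciSup hbdd p
  rw [hval] at this
  exact le_trans (le_abs_self _) this

lemma ellSeq_self (ℓT : ℝ → Bool) (p0 p1 Δ : ℝ) (T : ℕ) :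
    ellSeq ℓT p0 p1 Δ T T = ℓT := funext fun x => by simp [ellSeq]

lemma meas_ellSeq (ℓT : ℝ → Bool) (hℓT : Measurable ℓT) (p0 p1 Δ : ℝ) (T s : ℕ) :
    Measurable (ellSeq ℓT p0 p1 Δ T s) := by
  unfold ellSeq
  by_cases hs : s = T
  · simpa [hs] using hℓT
  · simp only [hs, if_false]
    have hnot : Measurable fun x => !(ℓT x) :=
      (measurable_from_top (f := not)).comp hℓT
    refine Measurable.ite ?_ hnot hℓT
    rcases Nat.mod_two_eq_zero_or_one (T - s) with h | h
    · have he : {x : ℝ | (x ∈ Set.Ico p0 (p0 + Δ / 2) ∧ (T - s) % 2 = 1) ∨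
          (x ∈ Set.Ico p1 (p1 + Δ / 2) ∧ (T - s) % 2 = 0)} = Set.Ico p1 (p1 + Δ / 2) := by
        ext x; simp [h]
      rw [he]; exact measurableSet_Ico
    · have he : {x : ℝ | (x ∈ Set.Ico p0 (p0 + Δ / 2) ∧ (T - s) % 2 = 1) ∨
          (x ∈ Set.Ico p1 (p1 + Δ / 2) ∧ (T - s) % 2 = 0)} = Set.Ico p0 (p0 + Δ / 2) := by
        ext x; simp [h]
      rw [he]; exact measurableSet_Ico

lemma ellSeq_ne (ℓT : ℝ → Bool) (p0 p1 Δ : ℝ) (T s : ℕ) (x : ℝ)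
    (h : ellSeq ℓT p0 p1 Δ T s x ≠ ℓT x) :
    x ∈ Set.Ico p0 (p0 + Δ / 2) ∪ Set.Ico p1 (p1 + Δ / 2) := by
  unfold ellSeq at h
  split at h
  · exact absurd rfl h
  · split at h
    · rename_i hcond
      rcases hcond with ⟨h0, _⟩ | ⟨h1', _⟩
      exacts [Or.inl h0, Or.inr h1']
    · exact absurd rfl h

/-- for the drifting threshold-labeling construction:
(i) `‖P_T − P_{T−1}‖_F = Δ/2`; (ii) `‖P_t − P_{t−1}‖_F = Δ` for `1 < t < T`;
(iii) `max_{0 ≤ t ≤ r−1} ‖P_T − P_{T−t}‖_F ≤ Δ` for every `1 ≤ r ≤ T`. -/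
theorem stmt19 (T : ℕ) (hT : 2 ≤ T) (Δ : ℝ) (hΔ0 : 0 < Δ) (hΔ1 : Δ < 1)
    (p0 p1 : ℝ) (hp00 : 0 ≤ p0) (hp01 : p0 + Δ / 2 ≤ 1)
    (hp10 : 0 ≤ p1) (hp11 : p1 + Δ / 2 ≤ 1)
    (hdisj : Disjoint (Set.Ico p0 (p0 + Δ / 2)) (Set.Ico p1 (p1 + Δ / 2)))
    (ℓT : ℝ → Bool) (hℓTmeas : Measurable ℓT)
    (hI0 : ∀ x ∈ Set.Ico p0 (p0 + Δ / 2), ℓT x = false)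
    (hI1 : ∀ x ∈ Set.Ico p1 (p1 + Δ / 2), ℓT x = true) :
    dThresh (Pl (ellSeq ℓT p0 p1 Δ T T)) (Pl (ellSeq ℓT p0 p1 Δ T (T - 1)))
        = Δ / 2 ∧
      (∀ t : ℕ, 1 < t → t < T →
        dThresh (Pl (ellSeq ℓT p0 p1 Δ T t)) (Pl (ellSeq ℓT p0 p1 Δ T (t - 1)))
          = Δ) ∧
      ∀ r : ℕ, 1 ≤ r → r ≤ T →
        (⨆ t : Fin r,
          dThresh (Pl (ellSeq ℓT p0 p1 Δ T T))
            (Pl (ellSeq ℓT p0 p1 Δ T (T - (t : ℕ))))) ≤ Δ := by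
  set I0 := Set.Ico p0 (p0 + Δ / 2) with hI0def
  set I1 := Set.Ico p1 (p1 + Δ / 2) with hI1def
  have hI0sub : I0 ⊆ Set.Icc (0:ℝ) 1 := fun x hx =>
    ⟨hp00.trans hx.1, (le_of_lt hx.2).trans hp01⟩
  have hI1sub : I1 ⊆ Set.Icc (0:ℝ) 1 := fun x hx =>
    ⟨hp10.trans hx.1, (le_of_lt hx.2).trans hp11⟩
  have volI0 : volume I0 = ENNReal.ofReal (Δ / 2) := by
    rw [hI0def, Real.volume_Ico]; congr 1; ring
  have volI1 : volume I1 = ENNReal.ofReal (Δ / 2) := by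
    rw [hI1def, Real.volume_Ico]; congr 1; ring
  have volS : volume (I0 ∪ I1) = ENNReal.ofReal Δ := by
    rw [measure_union hdisj measurableSet_Ico, volI0, volI1,
      ← ENNReal.ofReal_add (by positivity) (by positivity)]
    congr 1; ring
  have hSmeas : MeasurableSet (I0 ∪ I1) :=
    measurableSet_Ico.union measurableSet_Ico
  have hSsub : I0 ∪ I1 ⊆ Set.Icc (0:ℝ) 1 := Set.union_subset hI0sub hI1sub
  have hzero : (0:ℝ) ∈ Set.Icc (0:ℝ) 1 := by norm_num
  set P : Bool × (Set.Icc (0:ℝ) 1) := (true, ⟨0, hzero⟩) with hPdef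
  have hthrP : ∀ x : ℝ, 0 ≤ x → thr (P.1, (P.2 : ℝ)) x = true := by
    intro x hx; simp [hPdef, thr, hx]
  refine ⟨?_, ?_, ?_⟩
  · -- part (i)
    have hsne : T - 1 ≠ T := by omega
    have hk : T - (T - 1) = 1 := by omega
    rw [ellSeq_self]
    have := dThresh_eq ℓT (ellSeq ℓT p0 p1 Δ T (T - 1)) hℓTmeas
      (meas_ellSeq ℓT hℓTmeas p0 p1 Δ T (T - 1)) I0 measurableSet_Ico hI0sub
      (fun x hxne => by
        by_contra hx
        exact hxne (by simp [ellSeq, hsne, hk, ← hI0def, hx]))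
      P
      (fun x hx => by
        have h0x : (0:ℝ) ≤ x := hp00.trans hx.1
        rw [hthrP x h0x]
        constructor
        · rw [hI0 x hx]; simp
        · simp [ellSeq, hsne, hk, ← hI0def, hx, hI0 x hx])
    rw [this, volI0, ENNReal.toReal_ofReal (by positivity)]
  · -- part (ii)
    intro t h1t h2t
    have hsne : t ≠ T := by omega
    have hs'ne : t - 1 ≠ T := by omega
    have h1 : ∀ x, ellSeq ℓT p0 p1 Δ T t x ≠ ellSeq ℓT p0 p1 Δ T (t - 1) x →
        x ∈ I0 ∪ I1 := by
      intro x hxne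
      by_contra hx
      rw [Set.mem_union] at hx
      push_neg at hx
      exact hxne (by simp [ellSeq, hsne, hs'ne, ← hI0def, ← hI1def, hx.1, hx.2])
    have hval : ∀ x ∈ I0 ∪ I1, thr (P.1, (P.2 : ℝ)) x = true := by
      intro x hx
      rcases hx with hx | hx
      · exact hthrP x (hp00.trans hx.1)
      · exact hthrP x (hp10.trans hx.1)
    rcases Nat.mod_two_eq_zero_or_one (T - t) with hk | hk
    · -- T - t even : ℓ_t flips I1 (→ false on S), ℓ_{t-1} flips I0 (→ true on S)
      have hk' : (T - (t - 1)) % 2 = 1 := by omega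
      have := dThresh_eq (ellSeq ℓT p0 p1 Δ T t) (ellSeq ℓT p0 p1 Δ T (t - 1))
        (meas_ellSeq ℓT hℓTmeas p0 p1 Δ T t) (meas_ellSeq ℓT hℓTmeas p0 p1 Δ T (t - 1))
        (I0 ∪ I1) hSmeas hSsub h1 P
        (fun x hx => by
          rw [hval x hx]
          rcases hx with hx | hx
          · have hx1 : x ∉ I1 := Set.disjoint_left.1 hdisj hx
            constructor
            · simp [ellSeq, hsne, hk, ← hI0def, ← hI1def, hx, hx1, hI0 x hx]
            · simp [ellSeq, hs'ne, hk', ← hI0def, ← hI1def, hx, hx1, hI0 x hx]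
          · have hx0 : x ∉ I0 := Set.disjoint_right.1 hdisj hx
            constructor
            · simp [ellSeq, hsne, hk, ← hI0def, ← hI1def, hx, hx0, hI1 x hx]
            · simp [ellSeq, hs'ne, hk', ← hI0def, ← hI1def, hx, hx0, hI1 x hx])
      rw [this, volS, ENNReal.toReal_ofReal hΔ0.le]
    · -- T - t odd : ℓ_t → true on S, ℓ_{t-1} → false on S; use symmetry
      have hk' : (T - (t - 1)) % 2 = 0 := by omega
      rw [dThresh_comm]
      have h1' : ∀ x, ellSeq ℓT p0 p1 Δ T (t - 1) x ≠ ellSeq ℓT p0 p1 Δ T t x →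
          x ∈ I0 ∪ I1 := fun x hx => h1 x (Ne.symm hx)
      have := dThresh_eq (ellSeq ℓT p0 p1 Δ T (t - 1)) (ellSeq ℓT p0 p1 Δ T t)
        (meas_ellSeq ℓT hℓTmeas p0 p1 Δ T (t - 1)) (meas_ellSeq ℓT hℓTmeas p0 p1 Δ T t)
        (I0 ∪ I1) hSmeas hSsub h1' P
        (fun x hx => by
          rw [hval x hx]
          rcases hx with hx | hx
          · have hx1 : x ∉ I1 := Set.disjoint_left.1 hdisj hx
            constructor
            · simp [ellSeq, hs'ne, hk', ← hI0def, ← hI1def, hx, hx1, hI0 x hx]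
            · simp [ellSeq, hsne, hk, ← hI0def, ← hI1def, hx, hx1, hI0 x hx]
          · have hx0 : x ∉ I0 := Set.disjoint_right.1 hdisj hx
            constructor
            · simp [ellSeq, hs'ne, hk', ← hI0def, ← hI1def, hx, hx0, hI1 x hx]
            · simp [ellSeq, hsne, hk, ← hI0def, ← hI1def, hx, hx0, hI1 x hx])
      rw [this, volS, ENNReal.toReal_ofReal hΔ0.le]
  · -- part (iii)
    intro r hr1 hrT
    have : Nonempty (Fin r) := ⟨⟨0, hr1⟩⟩
    refine ciSup_le fun t => ?_
    refine dThresh_le _ _ (meas_ellSeq ℓT hℓTmeas p0 p1 Δ T T)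
      (meas_ellSeq ℓT hℓTmeas p0 p1 Δ T (T - (t : ℕ))) (I0 ∪ I1) hSmeas
      (fun x hxne => ?_) Δ ?_
    · refine ellSeq_ne ℓT p0 p1 Δ T (T - (t : ℕ)) x ?_
      intro hc
      exact hxne (by rw [ellSeq_self, hc])
    · have hle : volume ((I0 ∪ I1) ∩ Set.Icc (0:ℝ) 1) ≤ ENNReal.ofReal Δ := by
        rw [← volS]
        exact measure_mono Set.inter_subset_left
      calc (volume ((I0 ∪ I1) ∩ Set.Icc (0:ℝ) 1)).toReal
          ≤ (ENNReal.ofReal Δ).toReal := ENNReal.toReal_mono ENNReal.ofReal_ne_top hle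
        _ = Δ := ENNReal.toReal_ofReal hΔ0.le
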